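/- Let (X,S) be an S-metric space, r ≥ 0, and suppose the sequence (x_n) in X is r-convergent to x ∈ X. If (ξ_n) is a sequence with ξ_n ∈ LIM^r x_n for all n and (ξ_n) converges to ξ ∈ X, then (x_n) is 2r-convergent to ξ. -/
import Mathlib


/-- An S-metric on a set `X`. -/
structure SMetric (X : Type*) where
  S : X → X → X → ℝ
  nonneg : ∀ x y z, 0 ≤ S x y z
  eq_zero_iff : ∀ x y z, S x y z = 0 ↔ x = y ∧ y = z
  tri : ∀ x y z a, S x y z ≤ S x x a + S y y a + S z z a

/-- `(x n)` is `r`-convergent to `p`. -/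
def SMetric.RConv {X : Type*} (d : SMetric X) (r : ℝ) (x : ℕ → X) (p : X) : Prop :=
  ∀ ε > 0, ∃ k : ℕ, ∀ n ≥ k, d.S (x n) (x n) p < r + ε

/-- The `r`-limit set of `(x n)`. -/
def SMetric.rLimitSet {X : Type*} (d : SMetric X) (r : ℝ) (x : ℕ → X) : Set X :=
  {p | d.RConv r x p}

/-- `(x n)` converges to `p`. -/
def SMetric.Conv {X : Type*} (d : SMetric X) (x : ℕ → X) (p : X) : Prop :=
  ∀ ε > 0, ∃ k : ℕ, ∀ n ≥ k, d.S (x n) (x n) p < ε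

lemma SMetric.symm' {X : Type*} (d : SMetric X) (a b : X) :
    d.S a a b ≤ d.S b b a := by
  have h := d.tri a a b a
  have h0 : d.S a a a = 0 := (d.eq_zero_iff a a a).mpr ⟨rfl, rfl⟩
  linarith

/-- If ξ_n lies in the r-limit set of x_n and ξ_n converges to ξ, then x_n is
2r-convergent to ξ. -/
theorem twoR_conv {X : Type*} (d : SMetric X) (r : ℝ) (hr : 0 ≤ r)
    (x : ℕ → X) (p : X) (hx : d.RConv r x p)
    (ξseq : ℕ → X) (hξ : ∀ n, ξseq n ∈ d.rLimitSet r x)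
    (ξ : X) (hconv : d.Conv ξseq ξ) : d.RConv (2 * r) x ξ := by
  intro ε hε
  obtain ⟨m, hm⟩ := hconv (ε / 3) (by linarith)
  have hξm : d.S (ξseq m) (ξseq m) ξ < ε / 3 := hm m le_rfl
  obtain ⟨k, hk⟩ := hξ m (ε / 3) (by linarith)
  refine ⟨k, fun n hn => ?_⟩
  have h1 : d.S (x n) (x n) (ξseq m) < r + ε / 3 := hk n hn
  have h2 : d.S ξ ξ (ξseq m) ≤ d.S (ξseq m) (ξseq m) ξ := d.symm' ξ (ξseq m)
  have h3 := d.tri (x n) (x n) ξ (ξseq m)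
  linarith
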